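/- Let C = {f ∈ F : φ(f) = f} be algebraically closed of characteristic 0. If M is an irreducible D-module (finite-dimensional over F) whose restriction M↓^1_t to D_t is reducible for some t ≥ 1, then there exists a divisor s > 1 of gcd(t, dim_F M) and an irreducible D_s-module N such that M ≅ D ⊗_{D_s} N as D-modules. -/

import Mathlib

/-- The fixed field `C = {f ∈ F : φ(f) = f}` of a field automorphism `φ`. -/
def fixedSubfield {F : Type*} [Field F] (φ : F ≃+* F) : Subfield F where
  carrier := {f | φ f = f}
  mul_mem' := by intro a b ha hb; simp only [Set.mem_setOf_eq] at *; rw [map_mul, ha, hb]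
  one_mem' := by simp [Set.mem_setOf_eq]
  add_mem' := by intro a b ha hb; simp only [Set.mem_setOf_eq] at *; rw [map_add, ha, hb]
  zero_mem' := by simp [Set.mem_setOf_eq]
  neg_mem' := by intro a ha; simp only [Set.mem_setOf_eq] at *; rw [map_neg, ha]
  inv_mem' := by intro a ha; simp only [Set.mem_setOf_eq] at *; rw [map_inv₀, ha]

/-- A subspace `p` is stable under the (semilinear) action `g`. -/
def DiffStab {F V : Type*} [Field F] [AddCommGroup V] [Module F V]
    (g : V → V) (p : Submodule F V) : Prop :=
  ∀ x ∈ p, g x ∈ p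

/-!
View `V` as a module over `D_t`, the ring generated by the scalars and `A^t`, and pick a simple
`D_t`-submodule `N ⊆ p₀` with isotypic component `I`.  `A` permutes the isotypic components, and
`A^t` fixes `I`; let `s ∣ t` be the exact period of `I`.  The components `A^i I`, `i < s`, are
distinct, hence independent, and their sum is `A`-stable, hence all of `V`.  So
`V = ⊕_{i<s} A^i I`, which gives `s ∣ dim V`, and irreducibility of `V` forces `I` to be a simple
`D_s`-module.

It remains to see `s ≠ 1`, i.e. `A N ≇ N`.  An isomorphism `ψ : A N ≅ N` makes `B = ψ ∘ A` a
`φ`-semilinear automorphism of `N` commuting with `A^t`.  Then `A^t B^{-t}` is a `D_t`-endomorphism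
of `N`, hence (Schur, over the algebraically closed constants) a constant `c`.  So
`h ↦ A ∘ h ∘ B⁻¹` maps the span of the `A^i ∘ B^{-i}` (`i < t`) to itself, and the image of an
eigenvector is a nonzero `A`-stable subspace of dimension `≤ dim N < dim V`.
-/

open Polynomial in
theorem mem_fixedSubfield_of_iterate_eq {F : Type*} [Field F] (φ : F ≃+* F)
    [IsAlgClosed (fixedSubfield φ)] {t : ℕ} (ht : 0 < t) {x : F} (hx : (⇑φ)^[t] x = x) :
    x ∈ fixedSubfield φ := by
  set P : F[X] := ∏ i ∈ Finset.range t, (X - C ((⇑φ)^[i] x))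
  -- `φ` permutes the roots `φ^[i] x` of `P` cyclically, so it fixes `P`
  have hP : P.map (φ : F →+* F) = P := by
    obtain ⟨n, rfl⟩ := Nat.exists_eq_add_one_of_ne_zero ht.ne'
    simp only [P, Polynomial.map_prod, Polynomial.map_sub, map_X, map_C, RingHom.coe_coe,
      ← Function.iterate_succ_apply' (⇑φ)]
    rw [Finset.prod_range_succ, Finset.prod_range_succ' (fun i => X - C ((⇑φ)^[i] x)), hx]
    rfl
  have hlifts : P ∈ lifts (algebraMap (fixedSubfield φ) F) :=
    (lifts_iff_coeff_lifts P).2 fun n =>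
      ⟨⟨P.coeff n, show φ _ = _ by simpa [coeff_map] using congrArg (coeff · n) hP⟩, rfl⟩
  obtain ⟨Q, hQ, -, hQmonic⟩ := lifts_and_degree_eq_and_monic hlifts
    (monic_prod_of_monic _ _ fun i _ => monic_X_sub_C _)
  have hint : IsIntegral (fixedSubfield φ) x := by
    refine ⟨Q, hQmonic, ?_⟩
    rw [← eval_map, hQ, eval_prod]
    exact Finset.prod_eq_zero (Finset.mem_range.2 ht) (by simp)
  obtain ⟨c, rfl⟩ := minpoly.natDegree_eq_one_iff.1 <| natDegree_eq_of_degree_eq_some <|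
    IsAlgClosed.degree_eq_one_of_irreducible _ (minpoly.irreducible hint)
  exact c.2

theorem DiffStab.iterate {F V : Type*} [Field F] [AddCommGroup V] [Module F V] {g : V → V}
    {p : Submodule F V} (h : DiffStab g p) (n : ℕ) : DiffStab g^[n] p := by
  induction n with
  | zero => exact fun x hx => hx
  | succ n ih => exact fun x hx => by rw [Function.iterate_succ_apply']; exact h _ (ih x hx)

theorem iSupIndep.eq_of_le_of_iSup_eq_top {ι α : Type*} [CompleteLattice α] [IsModularLattice α]
    {p q : ι → α} (hq : iSupIndep q) (hle : ∀ i, p i ≤ q i) (htop : ⨆ i, p i = ⊤) (i : ι) :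
    p i = q i := by
  have hdisj : q i ⊓ ⨆ (j) (_ : j ≠ i), p j = ⊥ :=
    disjoint_iff.1 <| (hq i).mono_right <| iSup₂_mono fun j _ => hle j
  symm
  calc q i = (p i ⊔ ⨆ (j) (_ : j ≠ i), p j) ⊓ q i := by
        rw [← iSup_split_single, htop, top_inf_eq]
    _ = p i := by rw [sup_inf_assoc_of_le _ (hle i), inf_comm, hdisj, sup_bot_eq]

theorem OrderIso.map_iSup_iterate_le {α : Type*} [CompleteLattice α] (f : α ≃o α) {x : α}
    {u : ℕ} (hx : f^[u] x ≤ x) : f (⨆ i : Fin u, f^[i] x) ≤ ⨆ i : Fin u, f^[i] x := by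
  rw [f.map_iSup]
  refine iSup_le fun i => ?_
  rw [← Function.iterate_succ_apply' f]
  rcases (Nat.succ_le_of_lt i.2).lt_or_eq with h | h
  · exact le_iSup (fun j : Fin u => f^[j] x) ⟨i + 1, h⟩
  · rw [h]
    exact hx.trans (le_iSup (fun j : Fin u => f^[j] x) ⟨0, i.pos⟩)

section Isotypic

variable {R R₂ M M₂ : Type*} [Ring R] [Ring R₂] [AddCommGroup M] [AddCommGroup M₂]
  [Module R M] [Module R₂ M₂]

theorem LinearEquiv.nonempty_linearEquiv_map {τ : R →+* R₂} {τ' : R₂ →+* R}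
    [RingHomInvPair τ τ'] [RingHomInvPair τ' τ] (e : M ≃ₛₗ[τ] M₂) {p q : Submodule R M}
    (h : Nonempty (p ≃ₗ[R] q)) :
    Nonempty (p.map (e : M →ₛₗ[τ] M₂) ≃ₗ[R₂] q.map (e : M →ₛₗ[τ] M₂)) :=
  h.map fun i => (e.submoduleMap p).symm.trans (i.trans (e.submoduleMap q))

theorem LinearEquiv.map_isotypicComponent {τ : R →+* R₂} {τ' : R₂ →+* R}
    [RingHomInvPair τ τ'] [RingHomInvPair τ' τ] (e : M ≃ₛₗ[τ] M₂) (p : Submodule R M) :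
    (isotypicComponent R M p).map (e : M →ₛₗ[τ] M₂) =
      isotypicComponent R₂ M₂ (p.map (e : M →ₛₗ[τ] M₂)) := by
  have key : Submodule.map (e : M →ₛₗ[τ] M₂) '' {m : Submodule R M | Nonempty (m ≃ₗ[R] p)} =
      {m : Submodule R₂ M₂ | Nonempty (m ≃ₗ[R₂] p.map (e : M →ₛₗ[τ] M₂))} := by
    ext m
    refine ⟨?_, fun h => ⟨m.map (e.symm : M₂ →ₛₗ[τ'] M), ?_, ?_⟩⟩
    · rintro ⟨m, hm, rfl⟩
      exact e.nonempty_linearEquiv_map hm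
    · obtain ⟨i⟩ := e.symm.nonempty_linearEquiv_map h
      exact ⟨i.trans (.ofEq _ _ ((Submodule.map_symm_eq_iff e).2 rfl))⟩
    · exact (Submodule.map_symm_eq_iff e).1 rfl
  rw [isotypicComponent, isotypicComponent, ← key]
  exact ((Submodule.orderIsoMapComap e).map_sSup _).trans sSup_image.symm

theorem nonempty_linearEquiv_of_isotypicComponent_eq {N N' : Submodule R M} (hN : IsAtom N)
    (hN' : IsAtom N') (h : isotypicComponent R M N = isotypicComponent R M N') :
    Nonempty (N ≃ₗ[R] N') :=
  have := isSimpleModule_iff_isAtom.2 hN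
  have := isSimpleModule_iff_isAtom.2 hN'
  isIsotypicOfType_submodule_iff.1 (IsIsotypicOfType.isotypicComponent R M N') N
    (h ▸ N.le_isotypicComponent)

theorem iSupIndep_isotypicComponent {ι : Type*} {N : ι → Submodule R M} (hN : ∀ i, IsAtom (N i))
    (hinj : Function.Injective fun i => isotypicComponent R M (N i)) :
    iSupIndep fun i => isotypicComponent R M (N i) :=
  ((sSupIndep_iff _).1 (sSupIndep_isotypicComponents R M)).comp
    (f := fun i => (⟨isotypicComponent R M (N i), N i, isSimpleModule_iff_isAtom.2 (hN i), rfl⟩ :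
      isotypicComponents R M))
    fun _ _ h => hinj (congrArg Subtype.val h)

end Isotypic

theorem Module.End.exists_eigenvector_of_pow_apply_eq_smul {K M : Type*} [Field K] [IsAlgClosed K]
    [AddCommGroup M] [Module K M] (f : Module.End K M) {v : M} (hv : v ≠ 0) {n : ℕ} (hn : 0 < n)
    {c : K} (h : (f ^ n) v = c • v) : ∃ w ≠ 0, ∃ μ : K, f w = μ • w := by
  set P := Submodule.span K (Set.range fun i : Fin n => (f ^ (i : ℕ)) v)
  have hgen : ∀ i : Fin n, (f ^ (i : ℕ)) v ∈ P := fun i => Submodule.subset_span ⟨i, rfl⟩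
  have hP : P.map f ≤ P := by
    rw [Submodule.map_span, Submodule.span_le]
    rintro _ ⟨_, ⟨i, rfl⟩, rfl⟩
    rw [← Module.End.mul_apply, ← pow_succ']
    rcases (show (i : ℕ) + 1 ≤ n from i.2).lt_or_eq with hi | hi
    · exact hgen ⟨i + 1, hi⟩
    · rw [hi, h]
      simpa using P.smul_mem c (hgen ⟨0, hn⟩)
  have hvP : v ∈ P := by simpa using hgen ⟨0, hn⟩
  have : FiniteDimensional K P := FiniteDimensional.span_of_finite K (Set.finite_range _)
  have : Nontrivial P := ⟨⟨⟨v, hvP⟩, 0, fun h => hv (congrArg Subtype.val h)⟩⟩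
  obtain ⟨μ, hμ⟩ := Module.End.exists_eigenvalue (f.restrict fun w hw => hP ⟨w, hw, rfl⟩)
  obtain ⟨w, hw⟩ := hμ.exists_hasEigenvector
  exact ⟨w, fun h => hw.2 (Subtype.ext h), μ, congrArg Subtype.val hw.apply_eq_smul⟩

section Semilinear

open Polynomial

variable {F V W : Type*} [Field F] [AddCommGroup V] [Module F V] [AddCommGroup W] [Module F W]
  {φ : F ≃+* F} {A : V ≃+ V}

theorem AddEquiv.iterate_map_smul (hA : ∀ (f : F) (v : V), A (f • v) = φ f • A v) (n : ℕ)
    (f : F) (v : V) : (⇑A)^[n] (f • v) = (⇑φ)^[n] f • (⇑A)^[n] v := by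
  induction n with
  | zero => rfl
  | succ n ih => simp only [Function.iterate_succ_apply', ih, hA]

theorem AddEquiv.symm_map_smul_of_semilinear (hA : ∀ (f : F) (v : V), A (f • v) = φ f • A v)
    (f : F) (v : V) : A.symm (f • v) = φ.symm f • A.symm v :=
  A.injective (by rw [hA]; simp)

theorem minpoly_map_eq_of_commute [FiniteDimensional F W] (σ : F →+* F) (T : W ≃+ W)
    (hT : ∀ (f : F) (x : W), T (f • x) = σ f • T x) (g : Module.End F W)
    (hg : Function.Commute g T) : (minpoly F g).map σ = minpoly F g := by
  have key : ∀ (p : F[X]) (x : W), aeval g (p.map σ) (T x) = T (aeval g p x) := by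
    intro p
    induction p using Polynomial.induction_on' with
    | add p q hp hq => intro x; simp [hp, hq]
    | monomial n a =>
      intro x
      simp [Module.End.pow_apply, (hg.iterate_left n).eq, hT]
  have hint : IsIntegral F g := .of_finite F g
  have h0 : aeval g ((minpoly F g).map σ) = 0 := LinearMap.ext fun y => by
    obtain ⟨x, rfl⟩ := T.surjective y
    simp [key]
  exact eq_of_monic_of_dvd_of_natDegree_le (minpoly.monic hint) ((minpoly.monic hint).map σ)
    (minpoly.dvd F g h0) natDegree_map_le

theorem exists_eq_smul_one_of_commute [FiniteDimensional F W] [IsAlgClosed (fixedSubfield φ)]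
    {t : ℕ} (ht : 0 < t) (T : W ≃+ W) (hT : ∀ (f : F) (x : W), T (f • x) = (⇑φ)^[t] f • T x)
    (hsimple : ∀ p : Submodule F W, DiffStab ⇑T p → p = ⊥ ∨ p = ⊤) (g : Module.End F W)
    (hg : Function.Commute g T) : ∃ c ∈ fixedSubfield φ, g = c • 1 := by
  rcases subsingleton_or_nontrivial W with hW | hW
  · exact ⟨0, zero_mem _, Subsingleton.elim _ _⟩
  have hint : IsIntegral F g := .of_finite F g
  -- conjugation by `T` fixes the minimal polynomial, so its coefficients are constants
  have hfix : ∀ n, (minpoly F g).coeff n ∈ fixedSubfield φ := fun n => by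
    refine mem_fixedSubfield_of_iterate_eq φ ht ?_
    have := congrArg (coeff · n) (minpoly_map_eq_of_commute ((φ : F →+* F) ^ t) T
      (by simpa [RingHom.coe_pow] using hT) g hg)
    simpa [coeff_map, RingHom.coe_pow] using this
  obtain ⟨Q, hQ, hdeg, -⟩ := lifts_and_degree_eq_and_monic
    ((lifts_iff_coeff_lifts (f := algebraMap (fixedSubfield φ) F) _).2 fun n =>
      ⟨⟨_, hfix n⟩, rfl⟩) (minpoly.monic hint)
  obtain ⟨c, hc⟩ := IsAlgClosed.exists_root Q (by rw [hdeg]; exact (minpoly.degree_pos hint).ne')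
  have hroot := hc.map (f := algebraMap (fixedSubfield φ) F)
  rw [hQ] at hroot
  have hstab : DiffStab ⇑T (g.eigenspace c) := fun x hx => by
    rw [Module.End.mem_eigenspace_iff] at hx ⊢
    rw [hg.eq, hx, hT, Function.iterate_fixed c.2]
  have htop := (hsimple _ hstab).resolve_left
    (Module.End.hasEigenvalue_iff.1 (Module.End.hasEigenvalue_of_isRoot hroot))
  refine ⟨c, c.2, LinearMap.ext fun x => ?_⟩
  simpa using Module.End.mem_eigenspace_iff.1 (htop ▸ Submodule.mem_top : x ∈ g.eigenspace c)

variable {B : W ≃+ W}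

def conjHom (hA : ∀ (f : F) (v : V), A (f • v) = φ f • A v)
    (hB : ∀ (f : F) (x : W), B (f • x) = φ f • B x) :
    (W →ₗ[F] V) →ₗ[fixedSubfield φ] (W →ₗ[F] V) where
  toFun h :=
    { toFun := fun x => A (h (B.symm x))
      map_add' := by simp
      map_smul' := fun f x => by
        simp [AddEquiv.symm_map_smul_of_semilinear hB, hA] }
  map_add' h h' := by ext; simp
  map_smul' c h := by
    ext x
    simp [Subfield.smul_def, hA, show φ c = c from c.2]

theorem conjHom_iterate_apply (hA : ∀ (f : F) (v : V), A (f • v) = φ f • A v)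
    (hB : ∀ (f : F) (x : W), B (f • x) = φ f • B x) (n : ℕ) (h : W →ₗ[F] V) (x : W) :
    ((⇑(conjHom hA hB))^[n] h) x = (⇑A)^[n] (h ((⇑B.symm)^[n] x)) := by
  induction n generalizing x with
  | zero => rfl
  | succ n ih =>
    rw [Function.iterate_succ_apply', Function.iterate_succ_apply', Function.iterate_succ_apply]
    exact congrArg A (ih _)

theorem exists_diffStab_finrank_le_of_commute [IsAlgClosed (fixedSubfield φ)]
    [FiniteDimensional F W] [Nontrivial W] (hA : ∀ (f : F) (v : V), A (f • v) = φ f • A v)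
    {t : ℕ} (ht : 0 < t) {ι : W →ₗ[F] V} (hι : Function.Injective ι) {T : W ≃+ W}
    (hιT : ∀ x, ι (T x) = (⇑A)^[t] (ι x))
    (hsimple : ∀ p : Submodule F W, DiffStab ⇑T p → p = ⊥ ∨ p = ⊤)
    (hB : ∀ (f : F) (x : W), B (f • x) = φ f • B x) (hBT : Function.Commute B T) :
    ∃ p : Submodule F V, p ≠ ⊥ ∧ DiffStab ⇑A p ∧ Module.finrank F p ≤ Module.finrank F W := by
  have hT (f : F) (x : W) : T (f • x) = (⇑φ)^[t] f • T x :=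
    hι (by simp [hιT, AddEquiv.iterate_map_smul hA])
  have hBT' : Function.Commute B.symm T := fun x => B.injective (by simp [hBT.eq])
  let g : Module.End F W :=
    { toFun := fun x => T ((⇑B.symm)^[t] x)
      map_add' := fun x y => by simp [map_add]
      map_smul' := fun f x => by
        simp [AddEquiv.iterate_map_smul (AddEquiv.symm_map_smul_of_semilinear hB), hT,
          (Function.LeftInverse.iterate φ.apply_symm_apply t) f] }
  -- by Schur `T ∘ B^{-t}` is a constant `c`, so `ι` is an eigenvector of `conjHom ^ t`
  obtain ⟨c, hc, hgc⟩ := exists_eq_smul_one_of_commute ht T hT hsimple g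
    fun x => congrArg T ((hBT'.iterate_left t).eq x)
  have hpow : (conjHom hA hB ^ t) ι = (⟨c, hc⟩ : fixedSubfield φ) • ι := by
    ext x
    rw [Module.End.pow_apply, conjHom_iterate_apply, ← hιT]
    show ι (g x) = _
    simpa [Subfield.smul_def] using congrArg ι (LinearMap.congr_fun hgc x)
  have hι0 : ι ≠ 0 := fun h => by
    obtain ⟨x, hx⟩ := exists_ne (0 : W)
    exact hx (hι (by simp [h]))
  obtain ⟨h, hh, μ, hμ⟩ := Module.End.exists_eigenvector_of_pow_apply_eq_smul
    (conjHom hA hB) hι0 ht hpow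
  -- `A ∘ h = μ • h ∘ B`, so the image of `h` is `A`-stable
  refine ⟨LinearMap.range h, fun hr => hh (LinearMap.range_eq_bot.1 hr), ?_,
    LinearMap.finrank_range_le h⟩
  rintro _ ⟨x, rfl⟩
  refine ⟨(μ : F) • B x, ?_⟩
  have := LinearMap.congr_fun hμ (B x)
  simp only [conjHom, LinearMap.coe_mk, AddHom.coe_mk, AddEquiv.symm_apply_apply] at this
  rw [map_smul, this]
  rfl

end Semilinear

section SkewSubring

variable {F V : Type*} [Field F] [AddCommGroup V] [Module F V] {φ : F ≃+* F} {A : V ≃+ V}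
  (hA : ∀ (f : F) (v : V), A (f • v) = φ f • A v)

variable (F A) in
/-- `D_t`, acting on `V`.  Omitting `A^{-t}` from the generators does not change the submodules:
on a finite-dimensional space an `A^t`-stable subspace is `A^{-t}`-stable. -/
def skewSubring (t : ℕ) : Subring (Module.End ℤ V) :=
  Subring.closure (insert (A.toIntLinearEquiv.toLinearMap ^ t)
    (Set.range (Module.toModuleEnd ℤ (S := F) V)))

namespace skewSubring

variable {t : ℕ}

instance : SMul F (skewSubring F A t) :=
  ⟨fun f r => ⟨Module.toModuleEnd ℤ V f * r,
    mul_mem (Subring.subset_closure (Set.mem_insert_of_mem _ ⟨f, rfl⟩)) r.2⟩⟩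

instance : IsScalarTower F (skewSubring F A t) V := ⟨fun _ _ _ => rfl⟩

variable (F A t) in
def gen : skewSubring F A t := ⟨_, Subring.subset_closure (Set.mem_insert _ _)⟩

theorem gen_smul (v : V) : gen F A t • v = (⇑A)^[t] v :=
  Module.End.pow_apply _ _ _

theorem map_conjRingEquiv (hA : ∀ (f : F) (v : V), A (f • v) = φ f • A v) :
    (skewSubring F A t).map A.toIntLinearEquiv.conjRingEquiv.toRingHom = skewSubring F A t := by
  rw [skewSubring, RingHom.map_closure, Set.image_insert_eq, ← Set.range_comp]
  congr 2
  · rw [map_pow]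
    congr 1
    ext v
    simp
  · convert φ.surjective.range_comp (Module.toModuleEnd ℤ (S := F) V) using 2
    ext f v
    simp [hA]

variable (t) in
def conj : skewSubring F A t ≃+* skewSubring F A t :=
  (A.toIntLinearEquiv.conjRingEquiv.subringMap (s := skewSubring F A t)).trans
    (RingEquiv.subringCongr (map_conjRingEquiv hA))

theorem coe_conj (r : skewSubring F A t) :
    (conj hA t r : Module.End ℤ V) = A.toIntLinearEquiv.conjRingEquiv r := rfl

theorem conj_smul_one (f : F) : conj hA t (f • 1) = φ f • 1 :=
  Subtype.ext <| LinearMap.ext fun v => by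
    change A (f • A.symm v) = φ f • v
    simp [hA]

theorem conj_gen : conj hA t (gen F A t) = gen F A t :=
  Subtype.ext <| LinearMap.ext fun v => by
    change A ((A.toIntLinearEquiv.toLinearMap ^ t) (A.symm v)) =
      (A.toIntLinearEquiv.toLinearMap ^ t) v
    simp [Module.End.pow_apply, ← Function.iterate_succ_apply' (⇑A), Function.iterate_succ_apply]

instance : RingHomInvPair (conj hA t : skewSubring F A t →+* skewSubring F A t)
    (conj hA t).symm := .of_ringEquiv _

instance : RingHomInvPair ((conj hA t).symm : skewSubring F A t →+* skewSubring F A t)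
    (conj hA t) := .of_ringEquiv_symm _

variable (t) in
def semilinearShift : V ≃ₛₗ[(conj hA t : skewSubring F A t →+* skewSubring F A t)] V where
  __ := A
  map_smul' r v := by
    change A ((r : Module.End ℤ V) v) = (conj hA t r : Module.End ℤ V) (A v)
    simp [coe_conj]

variable (t) in
def shift : Submodule (skewSubring F A t) V ≃o Submodule (skewSubring F A t) V :=
  Submodule.orderIsoMapComap (semilinearShift hA t)

theorem mem_shift {P : Submodule (skewSubring F A t) V} {v : V} :
    v ∈ shift hA t P ↔ ∃ w ∈ P, A w = v :=
  Submodule.mem_map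

theorem mem_shift_iterate {P : Submodule (skewSubring F A t) V} {n : ℕ} {v : V} :
    v ∈ (⇑(shift hA t))^[n] P ↔ ∃ w ∈ P, (⇑A)^[n] w = v := by
  induction n generalizing v with
  | zero => simp
  | succ n ih =>
    simp only [Function.iterate_succ_apply', mem_shift, ih]
    constructor
    · rintro ⟨_, ⟨w, hw, rfl⟩, rfl⟩; exact ⟨w, hw, rfl⟩
    · rintro ⟨w, hw, rfl⟩; exact ⟨_, ⟨w, hw, rfl⟩, rfl⟩

theorem shift_iterate_le (P : Submodule (skewSubring F A t) V) :
    (⇑(shift hA t))^[t] P ≤ P := by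
  rintro v hv
  obtain ⟨w, hw, rfl⟩ := (mem_shift_iterate hA).1 hv
  simpa [gen_smul] using P.smul_mem (gen F A t) hw

theorem shift_isotypicComponent (P : Submodule (skewSubring F A t) V) :
    shift hA t (isotypicComponent (skewSubring F A t) V P) =
      isotypicComponent (skewSubring F A t) V (shift hA t P) :=
  (semilinearShift hA t).map_isotypicComponent P

theorem shift_iterate_isotypicComponent (P : Submodule (skewSubring F A t) V) (n : ℕ) :
    (⇑(shift hA t))^[n] (isotypicComponent (skewSubring F A t) V P) =
      isotypicComponent (skewSubring F A t) V ((⇑(shift hA t))^[n] P) := by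
  induction n with
  | zero => rfl
  | succ n ih => rw [Function.iterate_succ_apply', Function.iterate_succ_apply', ih,
      shift_isotypicComponent]

theorem eq_bot_or_eq_top_of_shift_le
    (hirr : ∀ p : Submodule F V, DiffStab ⇑A p → p = ⊥ ∨ p = ⊤)
    {P : Submodule (skewSubring F A t) V} (hP : shift hA t P ≤ P) : P = ⊥ ∨ P = ⊤ := by
  have := hirr (P.restrictScalars F) fun v hv => hP ((mem_shift hA).2 ⟨v, hv, rfl⟩)
  simpa only [Submodule.restrictScalars_eq_bot_iff, Submodule.restrictScalars_eq_top_iff]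

theorem finrank_shift (P : Submodule (skewSubring F A t) V) :
    Module.finrank F ((shift hA t P).restrictScalars F) =
      Module.finrank F (P.restrictScalars F) := by
  let e : (shift hA t P).restrictScalars F ≃+ P.restrictScalars F :=
    ((semilinearShift hA t).submoduleMap P).symm.toAddEquiv
  refine congrArg Cardinal.toNat (rank_eq_of_equiv_equiv (⇑φ.symm) e φ.symm.bijective
    fun f x => Subtype.ext (A.injective ?_))
  change A (A.symm (f • (x : V))) = A (φ.symm f • A.symm x)
  simp [hA]

theorem finrank_shift_iterate (P : Submodule (skewSubring F A t) V) (n : ℕ) :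
    Module.finrank F (((⇑(shift hA t))^[n] P).restrictScalars F) =
      Module.finrank F (P.restrictScalars F) := by
  induction n with
  | zero => rfl
  | succ n ih => rw [Function.iterate_succ_apply', finrank_shift, ih]

end skewSubring

open skewSubring

variable {t : ℕ}

def Submodule.toSkew (p : Submodule F V) (hp : DiffStab (⇑A)^[t] p) :
    Submodule (skewSubring F A t) V where
  carrier := p
  add_mem' := p.add_mem
  zero_mem' := p.zero_mem
  smul_mem' := by
    rintro ⟨r, hr⟩ v hv
    change r v ∈ p
    induction hr using Subring.closure_induction generalizing v with
    | mem r hr =>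
      rcases hr with rfl | ⟨f, rfl⟩
      · rw [Module.End.pow_apply]; exact hp v hv
      · exact p.smul_mem f hv
    | zero => exact p.zero_mem
    | one => exact hv
    | add r s _ _ hr hs => exact p.add_mem (hr hv) (hs hv)
    | neg r _ hr => exact p.neg_mem (hr hv)
    | mul r s _ _ hr hs => exact hr (hs hv)

theorem exists_isAtom_ne_top [FiniteDimensional F V] {p : Submodule F V}
    (hp : DiffStab (⇑A)^[t] p) (hbot : p ≠ ⊥) (htop : p ≠ ⊤) :
    ∃ N : Submodule (skewSubring F A t) V, IsAtom N ∧ N ≠ ⊤ := by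
  have : IsArtinian (skewSubring F A t) V := isArtinian_of_tower F inferInstance
  obtain ⟨N, hN, hNp⟩ := (eq_bot_or_exists_atom_le (p.toSkew hp)).resolve_left fun h =>
    hbot (congrArg (Submodule.restrictScalars F) h)
  refine ⟨N, hN, ?_⟩
  rintro rfl
  exact htop ((congrArg (Submodule.restrictScalars F) (top_le_iff.1 hNp)).trans
    (Submodule.restrictScalars_top _ _ _))

variable {N : Submodule (skewSubring F A t) V}

theorem IsAtom.shift_iterate (hN : IsAtom N) (n : ℕ) : IsAtom ((⇑(shift hA t))^[n] N) := by
  induction n with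
  | zero => exact hN
  | succ n ih => rw [Function.iterate_succ_apply', OrderIso.isAtom_iff]; exact ih

theorem IsAtom.shift_iterate_eq (hN : IsAtom N) : (⇑(shift hA t))^[t] N = N := by
  refine (hN.le_iff.1 (shift_iterate_le hA N)).resolve_left fun h => hN.1 ?_
  exact ((shift hA t).injective.iterate t) (h.trans (Function.iterate_fixed (map_bot _) t).symm)

theorem IsAtom.eq_bot_or_eq_top_of_gen_smul_mem (hN : IsAtom N) (p : Submodule F N)
    (hp : ∀ x ∈ p, gen F A t • x ∈ p) : p = ⊥ ∨ p = ⊤ := by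
  let ι : N →ₗ[F] V := N.subtype.restrictScalars F
  have hq : DiffStab (⇑A)^[t] (p.map ι) := by
    rintro _ ⟨x, hx, rfl⟩
    exact ⟨_, hp x hx, gen_smul _⟩
  have hle : (p.map ι).toSkew hq ≤ N := by
    rintro _ ⟨x, -, rfl⟩
    exact x.2
  refine (hN.le_iff.1 hle).imp (fun h => ?_) (fun h => ?_)
  · refine eq_bot_iff.2 fun x hx => (Submodule.mem_bot F).2 (Subtype.ext ?_)
    have : (x : V) ∈ (p.map ι).toSkew hq := ⟨x, hx, rfl⟩
    simpa [h] using this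
  · refine eq_top_iff.2 fun x _ => ?_
    obtain ⟨y, hy, hyx⟩ : (x : V) ∈ (p.map ι).toSkew hq := h.symm ▸ x.2
    rwa [← Subtype.ext hyx]

theorem IsAtom.isEmpty_shift_linearEquiv [FiniteDimensional F V] [IsAlgClosed (fixedSubfield φ)]
    (hirr : ∀ p : Submodule F V, DiffStab ⇑A p → p = ⊥ ∨ p = ⊤) (ht : 0 < t) (hN : IsAtom N)
    (hNtop : N ≠ ⊤) : IsEmpty (shift hA t N ≃ₗ[skewSubring F A t] N) := by
  refine ⟨fun ψ => ?_⟩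
  have : Nontrivial N := Submodule.nontrivial_iff_ne_bot.2 hN.1
  let ι : N →ₗ[F] V := N.subtype.restrictScalars F
  have hι : Function.Injective ι := Subtype.val_injective
  have : FiniteDimensional F N := Module.Finite.of_injective ι hι
  let T : N ≃+ N := AddEquiv.ofBijective (DistribSMul.toAddMonoidHom N (gen F A t))
    ⟨fun x y h => Subtype.ext <| A.injective.iterate t <| by
      simpa [gen_smul] using congrArg Subtype.val h, fun y => by
      have hy : (y : V) ∈ (⇑(shift hA t))^[t] N := by rw [hN.shift_iterate_eq hA]; exact y.2
      obtain ⟨w, hw, hwy⟩ := (mem_shift_iterate hA).1 hy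
      exact ⟨⟨w, hw⟩, Subtype.ext (by simpa [gen_smul] using hwy)⟩⟩
  -- `ψ ∘ A` is a `φ`-semilinear automorphism of `N` commuting with `A^t`
  let e := ((semilinearShift hA t).submoduleMap N).trans ψ
  have hB (f : F) (x : N) : e.toAddEquiv (f • x) = φ f • e.toAddEquiv x := by
    change e (f • x) = φ f • e x
    rw [← smul_one_smul (skewSubring F A t) f x, e.map_smulₛₗ]
    simp [conj_smul_one]
  have hBT : Function.Commute e.toAddEquiv T := fun x => by
    change e (gen F A t • x) = gen F A t • e x
    rw [e.map_smulₛₗ]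
    simp [conj_gen]
  obtain ⟨p, hp, hpA, hpN⟩ := exists_diffStab_finrank_le_of_commute hA ht hι
    (T := T) (fun x => gen_smul _) hN.eq_bot_or_eq_top_of_gen_smul_mem hB hBT
  have hlt : Module.finrank F N < Module.finrank F V := by
    rw [← LinearMap.finrank_range_of_inj hι]
    exact Submodule.finrank_lt (by simpa [ι, LinearMap.range_restrictScalars] using hNtop)
  rw [(hirr p hpA).resolve_left hp, finrank_top] at hpN
  omega

theorem IsAtom.iSupIndep_shift_iterate_isotypicComponent (hN : IsAtom N) :
    iSupIndep fun i : Fin (Function.minimalPeriod (shift hA t)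
        (isotypicComponent (skewSubring F A t) V N)) =>
      (⇑(shift hA t))^[i] (isotypicComponent (skewSubring F A t) V N) := by
  simp_rw [shift_iterate_isotypicComponent]
  refine iSupIndep_isotypicComponent (fun i => hN.shift_iterate hA i) fun i j h => Fin.ext ?_
  simp_rw [← shift_iterate_isotypicComponent] at h
  exact Function.iterate_injOn_Iio_minimalPeriod i.2 j.2 h

theorem IsAtom.isPeriodicPt_isotypicComponent (hN : IsAtom N) :
    Function.IsPeriodicPt (shift hA t) t (isotypicComponent (skewSubring F A t) V N) := by
  rw [Function.IsPeriodicPt, Function.IsFixedPt, shift_iterate_isotypicComponent,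
    hN.shift_iterate_eq]

theorem IsAtom.one_lt_minimalPeriod [FiniteDimensional F V] [IsAlgClosed (fixedSubfield φ)]
    (hirr : ∀ p : Submodule F V, DiffStab ⇑A p → p = ⊥ ∨ p = ⊤) (ht : 0 < t) (hN : IsAtom N)
    (hNtop : N ≠ ⊤) :
    1 < Function.minimalPeriod (shift hA t) (isotypicComponent (skewSubring F A t) V N) := by
  refine lt_of_le_of_ne ((hN.isPeriodicPt_isotypicComponent hA).minimalPeriod_pos ht) fun h =>
    (hN.isEmpty_shift_linearEquiv hA hirr ht hNtop).false ?_
  exact (nonempty_linearEquiv_of_isotypicComponent_eq (hN.shift_iterate hA 1) hN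
    ((shift_isotypicComponent hA N).symm.trans
      (Function.minimalPeriod_eq_one_iff_isFixedPt.1 h.symm))).some

theorem IsAtom.iSup_shift_iterate_isotypicComponent
    (hirr : ∀ p : Submodule F V, DiffStab ⇑A p → p = ⊥ ∨ p = ⊤) (ht : 0 < t) (hN : IsAtom N) :
    ⨆ i : Fin (Function.minimalPeriod (shift hA t) (isotypicComponent (skewSubring F A t) V N)),
      (⇑(shift hA t))^[i] (isotypicComponent (skewSubring F A t) V N) = ⊤ := by
  have hu := (hN.isPeriodicPt_isotypicComponent hA).minimalPeriod_pos ht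
  refine (eq_bot_or_eq_top_of_shift_le hA hirr ((shift hA t).map_iSup_iterate_le
    Function.iterate_minimalPeriod.le)).resolve_left fun h => hN.1 (eq_bot_iff.2 ?_)
  exact h ▸ N.le_isotypicComponent.trans (le_iSup_of_le (⟨0, hu⟩ : Fin _) le_rfl)

variable {u : ℕ} {P : Submodule (skewSubring F A t) V}

theorem existsUnique_eq_sum_iterate (hind : iSupIndep fun i : Fin u => (⇑(shift hA t))^[i] P)
    (htop : ⨆ i : Fin u, (⇑(shift hA t))^[i] P = ⊤) (v : V) :
    ∃! c : Fin u → P.restrictScalars F, v = ∑ i : Fin u, (⇑A)^[(i : ℕ)] (c i : V) := by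
  obtain ⟨μ, hμ⟩ := (Submodule.mem_iSup_finset_iff_exists_sum
    (s := Finset.univ) (fun i : Fin u => (⇑(shift hA t))^[i] P) v).1 (by simp [htop])
  choose c hc hcμ using fun i => (mem_shift_iterate hA).1 (μ i).2
  refine ⟨fun i => ⟨c i, hc i⟩, by simp [hcμ, hμ], fun c' hc' => funext fun i => Subtype.ext ?_⟩
  refine A.injective.iterate i ((iSupIndep_iff_finsetSum_eq_imp_eq _).1 hind Finset.univ
    (fun i => (⇑A)^[i] (c' i)) (fun i => (⇑A)^[i] (c i))
    (fun i _ => ⟨(mem_shift_iterate hA).2 ⟨_, (c' i).2, rfl⟩,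
      (mem_shift_iterate hA).2 ⟨_, hc i, rfl⟩⟩)
    ?_ i (Finset.mem_univ i))
  simp [hcμ, hμ, ← hc']

theorem finrank_eq_mul_finrank [FiniteDimensional F V]
    (hind : iSupIndep fun i : Fin u => (⇑(shift hA t))^[i] P)
    (htop : ⨆ i : Fin u, (⇑(shift hA t))^[i] P = ⊤) :
    Module.finrank F V = u * Module.finrank F (P.restrictScalars F) := by
  have hindF : iSupIndep fun i : Fin u => ((⇑(shift hA t))^[i] P).restrictScalars F := by
    refine iSupIndep_def.2 fun i => disjoint_iff.2 ?_
    simpa [← Submodule.restrictScalars_iSup, ← Submodule.restrictScalars_inf] using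
      disjoint_iff.1 (iSupIndep_def.1 hind i)
  have hint := DirectSum.isInternal_submodule_of_iSupIndep_of_iSup_eq_top hindF
    (by rw [← Submodule.restrictScalars_iSup, htop, Submodule.restrictScalars_top])
  rw [← (LinearEquiv.ofBijective (DirectSum.coeLinearMap _) hint).finrank_eq,
    Module.finrank_directSum]
  simp [finrank_shift_iterate]

theorem eq_bot_or_eq_of_diffStab_iterate
    (hirr : ∀ p : Submodule F V, DiffStab ⇑A p → p = ⊥ ∨ p = ⊤)
    (hind : iSupIndep fun i : Fin u => (⇑(shift hA t))^[i] P)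
    (hu : 0 < u) (hut : u ∣ t) {q : Submodule F V} (hqP : q ≤ P.restrictScalars F)
    (hq : DiffStab (⇑A)^[u] q) : q = ⊥ ∨ q = P.restrictScalars F := by
  obtain ⟨k, rfl⟩ := hut
  let Q := q.toSkew (by rw [Function.iterate_mul]; exact hq.iterate k)
  have hQ : (⇑(shift hA (u * k)))^[u] Q ≤ Q := fun v hv => by
    obtain ⟨w, hw, rfl⟩ := (mem_shift_iterate hA).1 hv
    exact hq w hw
  rcases eq_or_ne Q ⊥ with h | h
  · exact .inl (congrArg (Submodule.restrictScalars F) h)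
  -- the `A`-orbit of `Q` spans `V`, and it sits inside the independent orbit of `P`
  have hQtop : ⨆ i : Fin u, (⇑(shift hA (u * k)))^[i] Q = ⊤ :=
    (eq_bot_or_eq_top_of_shift_le hA hirr ((shift hA _).map_iSup_iterate_le hQ)).resolve_left
      fun h' => h (eq_bot_iff.2 (h' ▸ le_iSup_of_le (⟨0, hu⟩ : Fin u) le_rfl))
  exact .inr (congrArg (Submodule.restrictScalars F) (hind.eq_of_le_of_iSup_eq_top
    (fun i => (shift hA _).monotone.iterate i fun x hx => hqP hx) hQtop ⟨0, hu⟩))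

end SkewSubring

open skewSubring in
theorem irreducible_not_absolutely_irreducible_is_induced_general
    {F V : Type*} [Field F]
    (φ : F ≃+* F) [IsAlgClosed (fixedSubfield φ)]
    [AddCommGroup V] [Module F V] [FiniteDimensional F V]
    (A : V ≃+ V) (hA : ∀ (f : F) (v : V), A (f • v) = φ f • A v)
    (hirr : ∀ p : Submodule F V, DiffStab ⇑A p → p = ⊥ ∨ p = ⊤)
    (t : ℕ) (ht : 1 ≤ t)
    (p₀ : Submodule F V) (hp₀ : DiffStab ((⇑A)^[t]) p₀)
    (hp₀bot : p₀ ≠ ⊥) (hp₀top : p₀ ≠ ⊤) :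
    ∃ s : ℕ, 1 < s ∧ s ∣ Nat.gcd t (Module.finrank F V) ∧
      ∃ N : Submodule F V,
        DiffStab ((⇑A)^[s]) N ∧
        N ≠ ⊥ ∧ (∀ q ≤ N, DiffStab ((⇑A)^[s]) q → q = ⊥ ∨ q = N) ∧
        ∀ v : V, ∃! c : Fin s → N, v = ∑ i : Fin s, (⇑A)^[(i : ℕ)] (c i : V) := by
  obtain ⟨N, hN, hNtop⟩ := exists_isAtom_ne_top hp₀ hp₀bot hp₀top
  set I := isotypicComponent (skewSubring F A t) V N
  have hI := hN.isPeriodicPt_isotypicComponent hA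
  have hu := hN.one_lt_minimalPeriod hA hirr ht hNtop
  have hind := hN.iSupIndep_shift_iterate_isotypicComponent hA
  have htop := hN.iSup_shift_iterate_isotypicComponent hA hirr ht
  refine ⟨_, hu, Nat.dvd_gcd hI.minimalPeriod_dvd ⟨_, finrank_eq_mul_finrank hA hind htop⟩,
    I.restrictScalars F, fun v hv => ?_, fun h => hN.1 ?_, fun q hq hqs =>
      eq_bot_or_eq_of_diffStab_iterate hA hirr hind (by omega) hI.minimalPeriod_dvd hq hqs,
    existsUnique_eq_sum_iterate hA hind htop⟩
  · exact Function.iterate_minimalPeriod (f := shift hA t) (x := I) ▸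
      (mem_shift_iterate hA).2 ⟨v, hv, rfl⟩
  · exact eq_bot_iff.2 (N.le_isotypicComponent.trans
      ((Submodule.restrictScalars_eq_bot_iff _ _ _).1 h).le)

/-- Let the fixed field `C` of `φ` be algebraically closed of characteristic 0, and
let `M = (V, A)` be an irreducible finite-dimensional `D`-module whose restriction
`M↓^1_t` to `D_t` (i.e. `(V, A^t)`) is reducible for some `t ≥ 1`.  Then there is a
divisor `s > 1` of `gcd(t, dim_F M)` and an irreducible `D_s`-module `N` with
`M ≅ D ⊗_{D_s} N`: concretely, an `A^s`-stable subspace `N` of `V`, irreducible as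
a `D_s`-module, such that `V` is the internal direct sum `⊕_{i<s} A^i(N)` (every
`v ∈ V` is uniquely `∑_{i<s} A^i(nᵢ)` with `nᵢ ∈ N`). -/
theorem irreducible_not_absolutely_irreducible_is_induced
    {F V : Type*} [Field F] [CharZero F]
    (φ : F ≃+* F) [IsAlgClosed (fixedSubfield φ)]
    [AddCommGroup V] [Module F V] [FiniteDimensional F V]
    (A : V ≃+ V) (hA : ∀ (f : F) (v : V), A (f • v) = φ f • A v)
    (hnt : Nontrivial V)
    (hirr : ∀ p : Submodule F V, DiffStab ⇑A p → p = ⊥ ∨ p = ⊤)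
    (t : ℕ) (ht : 1 ≤ t)
    (p₀ : Submodule F V) (hp₀ : DiffStab ((⇑A)^[t]) p₀)
    (hp₀bot : p₀ ≠ ⊥) (hp₀top : p₀ ≠ ⊤) :
    ∃ s : ℕ, 1 < s ∧ s ∣ Nat.gcd t (Module.finrank F V) ∧
      ∃ N : Submodule F V,
        DiffStab ((⇑A)^[s]) N ∧
        N ≠ ⊥ ∧ (∀ q ≤ N, DiffStab ((⇑A)^[s]) q → q = ⊥ ∨ q = N) ∧
        ∀ v : V, ∃! c : Fin s → N, v = ∑ i : Fin s, (⇑A)^[(i : ℕ)] (c i : V) :=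
  irreducible_not_absolutely_irreducible_is_induced_general φ A hA hirr t ht p₀ hp₀ hp₀bot hp₀top
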